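/- arXiv:2512.08579 — 13 statements merged into one kernel-verified Lean document; each statement's English description precedes it below -/
import Mathlib

section
/- Let X and Y be L-algebras such that Y operates on X via ρ. For every (x,u) and (y,v) in the semidirect product X ⋊_ρ Y, we have (y,v) ≤ (x,u) if and only if v ≤ u and y ≤ ρ_{u·v}(x). -/
structure LAlgebra (X : Type*) where
  op : X → X → X
  one : X
  one_op : ∀ x, op one x = x
  op_one : ∀ x, op x one = one
  op_self : ∀ x, op x x = one
  cycl : ∀ x y z, op (op x y) (op x z) = op (op y x) (op y z)
  antisym : ∀ x y, op x y = one → op y x = one → x = y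

/-- Ideal of an L-algebra-like operation: contains the unit and satisfies (I1)-(I4). -/
def IsIdealOf {A : Type*} (op : A → A → A) (one : A) (I : Set A) : Prop :=
  one ∈ I ∧
  (∀ x y, x ∈ I → op x y ∈ I → y ∈ I) ∧
  (∀ x y, x ∈ I → op y x ∈ I) ∧
  (∀ x y, x ∈ I → op (op x y) y ∈ I) ∧
  (∀ x y, x ∈ I → op y (op x y) ∈ I)

/-- `Y` operates on `X` via `ρ`: each `ρ u` is an L-algebra endomorphism,
`ρ 1 = id`, and `ρ (u·v) ∘ ρ u = ρ (v·u) ∘ ρ v`. -/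
def Operates {X Y : Type*} (LX : LAlgebra X) (LY : LAlgebra Y) (ρ : Y → X → X) : Prop :=
  (∀ u x y, ρ u (LX.op x y) = LX.op (ρ u x) (ρ u y)) ∧
  (∀ u, ρ u LX.one = LX.one) ∧
  (∀ x, ρ LY.one x = x) ∧
  (∀ u v x, ρ (LY.op u v) (ρ u x) = ρ (LY.op v u) (ρ v x))

/-- Operation of the semidirect product `X ⋊_ρ Y`:
`(x,u)·(y,v) = (ρ_{u·v}(x)·ρ_{v·u}(y), u·v)`. -/
def sdOp {X Y : Type*} (LX : LAlgebra X) (LY : LAlgebra Y) (ρ : Y → X → X) :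
    X × Y → X × Y → X × Y :=
  fun p q => (LX.op (ρ (LY.op p.2 q.2) p.1) (ρ (LY.op q.2 p.2) q.1), LY.op p.2 q.2)

theorem stmt1 {X Y : Type*} (LX : LAlgebra X) (LY : LAlgebra Y) (ρ : Y → X → X)
    (hOp : Operates LX LY ρ) (x y : X) (u v : Y) :
    sdOp LX LY ρ (y, v) (x, u) = (LX.one, LY.one) ↔
      (LY.op v u = LY.one ∧ LX.op y (ρ (LY.op u v) x) = LX.one) := by
  obtain ⟨-, -, h1, -⟩ := hOp
  simp only [sdOp, Prod.mk.injEq]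
  constructor
  · rintro ⟨h, hvu⟩
    refine ⟨hvu, ?_⟩
    rwa [hvu, h1] at h
  · rintro ⟨hvu, h⟩
    refine ⟨?_, hvu⟩
    rwa [hvu, h1]
end

section
/- Let X and Y be L-algebras such that Y operates on X via ρ, and let K be an ideal of X ⋊_ρ Y. Then K_Y = {y ∈ Y : (1,y) ∈ K} is an ideal of Y and K_X = {x ∈ X : (x,1) ∈ K} is an ideal of X. -/
theorem stmt3 {X Y : Type*} (LX : LAlgebra X) (LY : LAlgebra Y) (ρ : Y → X → X)
    (hOp : Operates LX LY ρ) (K : Set (X × Y))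
    (hK : IsIdealOf (sdOp LX LY ρ) (LX.one, LY.one) K) :
    IsIdealOf LY.op LY.one {u : Y | (LX.one, u) ∈ K} ∧
    IsIdealOf LX.op LX.one {x : X | (x, LY.one) ∈ K} := by
  obtain ⟨hρop, hρ1, hρid, hρcomp⟩ := hOp
  obtain ⟨hK1, hKI1, hKI2, hKI3, hKI4⟩ := hK
  have hY : ∀ u v : Y, sdOp LX LY ρ (LX.one, u) (LX.one, v) = (LX.one, LY.op u v) := by
    intro u v
    simp [sdOp, hρ1, LX.op_self]
  have hX : ∀ x y : X, sdOp LX LY ρ (x, LY.one) (y, LY.one) = (LX.op x y, LY.one) := by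
    intro x y
    simp [sdOp, LY.op_self, hρid]
  constructor
  · refine ⟨hK1, ?_, ?_, ?_, ?_⟩
    · intro u v hu huv
      have := hKI1 (LX.one, u) (LX.one, v) hu
      rw [hY] at this
      exact this huv
    · intro u v hu
      have := hKI2 (LX.one, u) (LX.one, v) hu
      rwa [hY] at this
    · intro u v hu
      have := hKI3 (LX.one, u) (LX.one, v) hu
      rwa [hY, hY] at this
    · intro u v hu
      have := hKI4 (LX.one, u) (LX.one, v) hu
      rwa [hY, hY] at this
  · refine ⟨hK1, ?_, ?_, ?_, ?_⟩
    · intro x y hx hxy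
      have := hKI1 (x, LY.one) (y, LY.one) hx
      rw [hX] at this
      exact this hxy
    · intro x y hx
      have := hKI2 (x, LY.one) (y, LY.one) hx
      rwa [hX] at this
    · intro x y hx
      have := hKI3 (x, LY.one) (y, LY.one) hx
      rwa [hX, hX] at this
    · intro x y hx
      have := hKI4 (x, LY.one) (y, LY.one) hx
      rwa [hX, hX] at this
end

section
/- Let X and Y be L-algebras such that Y operates on X via ρ, and let K be an ideal of X ⋊_ρ Y. Then (x,u) ∈ K if and only if (x,1) ∈ K and (1,u) ∈ K. -/
theorem stmt4 {X Y : Type*} (LX : LAlgebra X) (LY : LAlgebra Y) (ρ : Y → X → X)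
    (hOp : Operates LX LY ρ) (K : Set (X × Y))
    (hK : IsIdealOf (sdOp LX LY ρ) (LX.one, LY.one) K) (x : X) (u : Y) :
    (x, u) ∈ K ↔ ((x, LY.one) ∈ K ∧ (LX.one, u) ∈ K) := by
  obtain ⟨h1, hI1, hI2, hI3, hI4⟩ := hK
  obtain ⟨hρop, hρ1, hρid, hρc⟩ := hOp
  constructor
  · intro hxu
    have h1u : (LX.one, u) ∈ K := by
      have := hI3 _ (LX.one, u) hxu
      simpa [sdOp, LX.op_one, LX.one_op, LY.op_one, LY.one_op, LY.op_self, hρ1, hρid]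
        using this
    refine ⟨?_, h1u⟩
    have h2 : sdOp LX LY ρ (x, LY.one) (sdOp LX LY ρ (LX.one, u) (x, LY.one)) ∈ K :=
      hI4 _ _ h1u
    have h2' : (LX.op x (ρ u x), LY.one) ∈ K := by
      simpa [sdOp, LX.op_one, LX.one_op, LY.op_one, LY.one_op, LY.op_self, hρ1, hρid]
        using h2
    refine hI1 (x, u) (x, LY.one) hxu ?_
    simpa [sdOp, LY.op_one, LY.one_op, hρid, hρ1] using h2'
  · rintro ⟨hx1, h1u⟩
    refine hI1 (LX.one, u) (x, u) h1u ?_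
    simpa [sdOp, LY.op_self, hρid, hρ1, LX.one_op] using hx1
end

section
/- Let X and Y be L-algebras such that Y operates on X via ρ, let U be an ideal of Y, and suppose ρ_u = id_X for all u ∈ U. Then {1} × U is an ideal of X ⋊_ρ Y. Conversely, if {1} × U is an ideal of X ⋊_ρ Y then ρ_u = id_X for all u ∈ U. -/
theorem stmt5 {X Y : Type*} (LX : LAlgebra X) (LY : LAlgebra Y) (ρ : Y → X → X)
    (hOp : Operates LX LY ρ) (U : Set Y) (hU : IsIdealOf LY.op LY.one U) :
    IsIdealOf (sdOp LX LY ρ) (LX.one, LY.one) (({LX.one} : Set X) ×ˢ U) ↔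
      (∀ u ∈ U, ∀ x : X, ρ u x = x) := by
  obtain ⟨hmul, honeX, hid, hcoc⟩ := hOp
  obtain ⟨h1U, hI1, hI2, hI3, hI4⟩ := hU
  constructor
  · rintro ⟨-, -, -, hJ3, hJ4⟩ u hu x
    have h3 := hJ3 (LX.one, u) (x, LY.one) ⟨rfl, hu⟩
    have h4 := hJ4 (LX.one, u) (x, LY.one) ⟨rfl, hu⟩
    simp only [sdOp, LY.op_one, LY.one_op, hid, honeX, LX.one_op, LX.op_one,
      Set.mem_prod, Set.mem_singleton_iff] at h3 h4
    exact LX.antisym _ _ h3.1 h4.1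
  · intro hρ
    refine ⟨⟨rfl, h1U⟩, ?_, ?_, ?_, ?_⟩
    · rintro ⟨a, u⟩ ⟨y, v⟩ ⟨ha, hu⟩ hmem
      simp only [Set.mem_singleton_iff] at ha; subst ha
      simp only [sdOp, honeX, LX.one_op, Set.mem_prod, Set.mem_singleton_iff] at hmem
      obtain ⟨hy, huv⟩ := hmem
      refine ⟨?_, hI1 u v hu huv⟩
      have hvu : LY.op v u ∈ U := hI2 u v hu
      rw [hρ _ hvu] at hy
      exact hy
    · rintro ⟨a, u⟩ ⟨y, v⟩ ⟨ha, hu⟩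
      simp only [Set.mem_singleton_iff] at ha; subst ha
      refine ⟨?_, hI2 u v hu⟩
      simp only [sdOp, honeX, LX.op_one, Set.mem_singleton_iff]
    · rintro ⟨a, u⟩ ⟨y, v⟩ ⟨ha, hu⟩
      simp only [Set.mem_singleton_iff] at ha; subst ha
      have hvu : LY.op v u ∈ U := hI2 u v hu
      refine ⟨?_, hI3 u v hu⟩
      simp only [sdOp, honeX, LX.one_op, Set.mem_singleton_iff]
      rw [hρ _ hvu y, hρ _ (hI3 u v hu) y, hρ _ (hI4 u v hu) y, LX.op_self]
    · rintro ⟨a, u⟩ ⟨y, v⟩ ⟨ha, hu⟩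
      simp only [Set.mem_singleton_iff] at ha; subst ha
      have hvu : LY.op v u ∈ U := hI2 u v hu
      refine ⟨?_, hI4 u v hu⟩
      simp only [sdOp, honeX, LX.one_op, Set.mem_singleton_iff]
      rw [hρ _ hvu y, hρ _ (hI3 u v hu) y, hρ _ (hI4 u v hu) y, LX.op_self]
end

section
/- Let X be a CKL-algebra with a minimal element z such that the upset ↑z = {x ∈ X : z ≤ x} is linearly ordered. Then ↑z is an ideal of X. -/
theorem stmt7 {X : Type*} (L : LAlgebra X)
    (hCKL : ∀ x y z : X, L.op x (L.op y z) = L.op y (L.op x z))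
    (z : X)
    (hmin : ∀ y : X, L.op y z = L.one → y = z)
    (hlin : ∀ a b : X, L.op z a = L.one → L.op z b = L.one →
      (L.op a b = L.one ∨ L.op b a = L.one)) :
    IsIdealOf L.op L.one {x : X | L.op z x = L.one} := by
  have trans : ∀ a b c : X, L.op a b = L.one → L.op b c = L.one → L.op a c = L.one := by
    intro a b c hab hbc
    have h := L.cycl a b c
    rw [hab, L.one_op] at h
    rw [h, hbc, L.op_one]
  refine ⟨L.op_one z, ?_, ?_, ?_, ?_⟩
  · intro x y hx hxy
    simp only [Set.mem_setOf_eq] at *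
    have hza : L.op z (L.op z y) = L.one := by
      refine trans z x (L.op z y) hx ?_
      rw [hCKL x z y]; exact hxy
    have zp : L.op z (L.op (L.op z y) y) = L.one := by
      rw [hCKL]; exact L.op_self (L.op z y)
    have zq : L.op z (L.op (L.op z y) z) = L.one := by
      rw [hCKL, L.op_self, L.op_one]
    have qp : L.op (L.op (L.op z y) z) (L.op (L.op z y) y) = L.op z y := by
      rw [L.cycl (L.op z y) z y, hza, L.one_op]
    have pq : L.op (L.op (L.op z y) y) (L.op (L.op z y) z) = L.op y z := by
      have hya : L.op y (L.op z y) = L.one := by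
        rw [hCKL, L.op_self, L.op_one]
      rw [L.cycl (L.op z y) y z, hya, L.one_op]
    rcases hlin _ _ zp zq with h | h
    · rw [pq] at h
      rw [hmin y h]; exact L.op_self z
    · rw [qp] at h; exact h
  · intro x y hx
    simp only [Set.mem_setOf_eq] at *
    rw [hCKL, hx, L.op_one]
  · intro x y hx
    simp only [Set.mem_setOf_eq] at *
    refine trans z x _ hx ?_
    rw [hCKL]; exact L.op_self (L.op x y)
  · intro x y hx
    simp only [Set.mem_setOf_eq] at *
    have h1 : L.op y (L.op x y) = L.one := by
      rw [hCKL, L.op_self, L.op_one]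
    rw [h1, L.op_one]
end

section
/- Let X be a Hilbert algebra. Then X is simple (i.e., its only ideals are {1} and X) if and only if |X| ≤ 2. -/
theorem stmt9 {X : Type*} (L : LAlgebra X)
    (hH : ∀ x y z : X, L.op x (L.op y z) = L.op (L.op x y) (L.op x z)) :
    (∀ I : Set X, IsIdealOf L.op L.one I → I = {L.one} ∨ I = Set.univ) ↔
      (∃ a b : X, ∀ x : X, x = a ∨ x = b) := by
  -- For each `a`, the upset `D a = {y | a·y = 1}` is an ideal.
  have hIdeal : ∀ a : X, IsIdealOf L.op L.one {y | L.op a y = L.one} := by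
    intro a
    refine ⟨L.op_one a, ?_, ?_, ?_, ?_⟩
    · intro x y hx hxy
      have : L.op a (L.op x y) = L.op a y := by
        rw [hH, hx, L.one_op]
      simpa [this] using hxy
    · intro x y hx
      show L.op a (L.op y x) = L.one
      rw [hH, hx, L.op_one]
    · intro x y hx
      have h1 : L.op a (L.op x y) = L.op a y := by rw [hH, hx, L.one_op]
      show L.op a (L.op (L.op x y) y) = L.one
      rw [hH, h1, L.op_self]
    · intro x y hx
      have h1 : L.op a (L.op x y) = L.op a y := by rw [hH, hx, L.one_op]
      show L.op a (L.op y (L.op x y)) = L.one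
      rw [hH, h1, L.op_self]
  have hDuniv : (∀ I : Set X, IsIdealOf L.op L.one I → I = {L.one} ∨ I = Set.univ) →
      ∀ a : X, a ≠ L.one → ∀ y : X, L.op a y = L.one := by
    intro hs a ha y
    rcases hs _ (hIdeal a) with h1 | h2
    · exfalso
      have : a ∈ ({y | L.op a y = L.one} : Set X) := L.op_self a
      rw [h1] at this
      exact ha this
    · have : y ∈ ({y | L.op a y = L.one} : Set X) := by rw [h2]; trivial
      exact this
  constructor
  · intro hs
    by_cases h : ∃ c : X, c ≠ L.one
    · obtain ⟨c, hc⟩ := h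
      refine ⟨L.one, c, fun x => ?_⟩
      by_cases hx : x = L.one
      · exact Or.inl hx
      · exact Or.inr (L.antisym x c (hDuniv hs x hx c) (hDuniv hs c hc x))
    · push_neg at h
      exact ⟨L.one, L.one, fun x => Or.inl (h x)⟩
  · rintro ⟨a, b, hab⟩ I hI
    by_cases h : I = {L.one}
    · exact Or.inl h
    · right
      have : ∃ c ∈ I, c ≠ L.one := by
        by_contra hno
        push_neg at hno
        apply h
        ext x
        simp only [Set.mem_singleton_iff]
        exact ⟨fun hx => hno x hx, fun hx => hx ▸ hI.1⟩
      obtain ⟨c, hcI, hc⟩ := this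
      ext x
      simp only [Set.mem_univ, iff_true]
      by_cases hx : x = L.one
      · exact hx ▸ hI.1
      · have hxc : x = c := by
          rcases hab L.one with h1 | h1 <;> rcases hab x with h2 | h2 <;>
            rcases hab c with h3 | h3 <;> first
              | exact h2.trans h3.symm
              | exact absurd (h2.trans h1.symm) hx
              | exact absurd (h3.trans h1.symm) hc
        exact hxc ▸ hcI
end

section
/- The L-algebra A_n = {0,...,n-1} with operation i·j = max(j-i, 0) and unit 0 is simple: its only ideals are {0} and A_n. -/
/-- The operation of `A_n` on `{0,…,n}`: `i · j = max (j - i) 0` (truncated subtraction). -/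
def Aop (n : ℕ) : Fin (n + 1) → Fin (n + 1) → Fin (n + 1) :=
  fun i j => ⟨j.val - i.val, lt_of_le_of_lt (Nat.sub_le _ _) j.isLt⟩

theorem stmt11 (n : ℕ) (I : Set (Fin (n + 1)))
    (h0 : (0 : Fin (n + 1)) ∈ I)
    (hI1 : ∀ x y : Fin (n + 1), x ∈ I → Aop n x y ∈ I → y ∈ I) :
    I = {0} ∨ I = Set.univ := by
  by_cases h : I = {0}
  · exact Or.inl h
  · right
    obtain ⟨k, hk, hk0⟩ : ∃ k ∈ I, k ≠ 0 := by
      by_contra hc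
      push_neg at hc
      apply h
      ext x
      simp only [Set.mem_singleton_iff]
      exact ⟨hc x, fun hx => hx ▸ h0⟩
    have hkpos : 0 < k.val := by
      rcases Nat.eq_zero_or_pos k.val with hz | hp
      · exact absurd (Fin.ext hz) hk0
      · exact hp
    have key : ∀ m : ℕ, ∀ y : Fin (n + 1), y.val = m → y ∈ I := by
      intro m
      induction m using Nat.strong_induction_on with
      | _ m ih =>
        intro y hy
        rcases Nat.eq_zero_or_pos m with hm | hm
        · have : y = 0 := Fin.ext (by simp [hy, hm])
          exact this ▸ h0
        · exact hI1 k y hk (ih (y.val - k.val) (by omega) _ rfl)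
    exact Set.eq_univ_of_forall fun x => key x.val x rfl
end

section
/- Let X be a finite linear L-algebra with elements x_0 > x_1 > ... > x_{n-1}, and suppose x_{i+1} is invariant (i.e., y·x_{i+1} = x_{i+1} for all y > x_{i+1}). Then for I = {x_j : j ≤ i}, we have x·y = y for all x ∈ I and y ∈ X \ I. -/
lemma LAlg.trans' {X : Type*} (L : LAlgebra X) {u v w : X}
    (h1 : L.op u v = L.one) (h2 : L.op v w = L.one) : L.op u w = L.one := by
  have h := L.cycl u v w
  rw [h1, h2, L.one_op, L.op_one] at h
  exact h

lemma LAlg.no_strict_chain {α : Type*} (hfin : Finite α) (r : α → α → Prop)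
    (htrans : ∀ {u v w}, r u v → r v w → r u w)
    (hanti : ∀ {u v}, r u v → r v u → u = v)
    (g : ℕ → α) (H : ∀ m, r (g (m+1)) (g m) ∧ g (m+1) ≠ g m) : False := by
  have mono : ∀ m d, r (g (m+d+1)) (g m) ∧ g (m+d+1) ≠ g m := by
    intro m d
    induction d with
    | zero => exact H m
    | succ d ih =>
      refine ⟨htrans (H (m+d+1)).1 ih.1, fun he => ?_⟩
      have h1 : r (g (m+d+1)) (g (m+d+2)) := by
        have := ih.1; rw [← he] at this; exact this
      exact (H (m+d+1)).2 (hanti (H (m+d+1)).1 h1)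
  have hinj : Function.Injective g := by
    intro p q hpq
    by_contra hpq'
    rcases lt_trichotomy p q with h' | h' | h'
    · have := (mono p (q - p - 1)).2
      rw [show p + (q-p-1) + 1 = q from by omega] at this
      exact this hpq.symm
    · exact hpq' h'
    · have := (mono q (p - q - 1)).2
      rw [show q + (p-q-1) + 1 = p from by omega] at this
      exact this hpq
  haveI := hfin
  obtain ⟨p, q, hne, heq⟩ := Finite.exists_ne_map_eq_of_infinite g
  exact hne (hinj heq)

lemma LAlg.key {X : Type*} (L : LAlgebra X) (hfin : Finite X)
    (total : ∀ u v : X, L.op u v = L.one ∨ L.op v u = L.one)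
    {a c : X} (hca : L.op c a = L.one) (hac : L.op a c = c)
    {y : X} (hy : L.op y c = L.one) : L.op a y = y := by
  by_contra hne
  have star : ∀ u, L.op u c = L.one → ∀ z, L.op (L.op a u) (L.op a z) = L.op u z := by
    intro u hu z
    have hua : L.op u a = L.one := LAlg.trans' L hu hca
    have h := L.cycl a u z
    rw [hua, L.one_op] at h
    exact h
  have step_c : ∀ u, L.op u c = L.one → L.op (L.op a u) c = L.one := by
    intro u hu
    have h := star u hu c
    rw [hac, hu] at h
    exact h
  set f := L.op a with hf
  have desc : ∀ u, L.op u c = L.one → L.op (f u) u = L.one → f u ≠ u →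
      L.op (f (f u)) (f u) = L.one ∧ f (f u) ≠ f u := by
    intro u hu hle hne'
    have h1 : L.op (f u) (f (f u)) = L.op u (f u) := star u hu (f u)
    have hut : L.op u (f u) ≠ L.one := fun h => hne' (L.antisym _ _ hle h)
    have h2 : L.op (f u) (f (f u)) ≠ L.one := by rw [h1]; exact hut
    have h3 : L.op (f (f u)) (f u) = L.one := (total _ _).resolve_left h2
    refine ⟨h3, fun he => h2 ?_⟩
    rw [he]; exact L.op_self _
  have asc : ∀ u, L.op u c = L.one → L.op u (f u) = L.one → f u ≠ u →
      L.op (f u) (f (f u)) = L.one ∧ f (f u) ≠ f u := by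
    intro u hu hle hne'
    have htc : L.op (f u) c = L.one := step_c u hu
    have h1 : L.op (f u) (f (f u)) = L.op u (f u) := star u hu (f u)
    have h2 : L.op (f u) (f (f u)) = L.one := by rw [h1]; exact hle
    have h3 : L.op (f (f u)) (f u) = L.op (f u) u := star (f u) htc u
    have h4 : L.op (f u) u ≠ L.one := fun h => hne' (L.antisym _ _ h hle)
    refine ⟨h2, fun he => h4 ?_⟩
    rw [← h3, he]; exact L.op_self _
  set g : ℕ → X := fun m => f^[m] y with hg
  have hgs : ∀ m, g (m+1) = f (g m) := fun m => Function.iterate_succ_apply' f m y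
  have hgc : ∀ m, L.op (g m) c = L.one := by
    intro m
    induction m with
    | zero => exact hy
    | succ m ih => rw [hgs]; exact step_c _ ih
  rcases total (f y) y with h | h
  · refine LAlg.no_strict_chain hfin (fun u v => L.op u v = L.one)
      (fun h1 h2 => LAlg.trans' L h1 h2) (fun h1 h2 => L.antisym _ _ h1 h2) g ?_
    intro m
    induction m with
    | zero => exact ⟨h, hne⟩
    | succ m ih =>
      have e1 : L.op (f (g m)) (g m) = L.one := by rw [← hgs]; exact ih.1
      have e2 : f (g m) ≠ g m := by rw [← hgs]; exact ih.2
      have hd := desc (g m) (hgc m) e1 e2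
      constructor
      · show L.op (g (m+2)) (g (m+1)) = L.one
        rw [hgs (m+1), hgs m]; exact hd.1
      · show g (m+2) ≠ g (m+1)
        rw [hgs (m+1), hgs m]; exact hd.2
  · refine LAlg.no_strict_chain hfin (fun u v => L.op v u = L.one)
      (fun h1 h2 => LAlg.trans' L h2 h1) (fun h1 h2 => L.antisym _ _ h2 h1) g ?_
    intro m
    induction m with
    | zero => exact ⟨h, hne⟩
    | succ m ih =>
      have e1 : L.op (g m) (f (g m)) = L.one := by rw [← hgs]; exact ih.1
      have e2 : f (g m) ≠ g m := by rw [← hgs]; exact ih.2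
      have hd := asc (g m) (hgc m) e1 e2
      constructor
      · show L.op (g (m+1)) (g (m+2)) = L.one
        rw [hgs (m+1), hgs m]; exact hd.1
      · show g (m+2) ≠ g (m+1)
        rw [hgs (m+1), hgs m]; exact hd.2

theorem stmt13 {X : Type*} (L : LAlgebra X) (n : ℕ) (x : Fin n → X)
    (hbij : Function.Bijective x)
    (hanti : ∀ i j : Fin n, i < j → (L.op (x j) (x i) = L.one ∧ x j ≠ x i))
    (i : ℕ) (hi : i + 1 < n)
    (hinv : ∀ y : X, L.op (x ⟨i + 1, hi⟩) y = L.one → y ≠ x ⟨i + 1, hi⟩ →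
      L.op y (x ⟨i + 1, hi⟩) = x ⟨i + 1, hi⟩) :
    ∀ j k : Fin n, j.val ≤ i → i < k.val → L.op (x j) (x k) = x k := by
  intro j k hj hk
  have hfin : Finite X := Finite.of_surjective x hbij.2
  have total : ∀ u v : X, L.op u v = L.one ∨ L.op v u = L.one := by
    intro u v
    obtain ⟨p, hp⟩ := hbij.2 u
    obtain ⟨q, hq⟩ := hbij.2 v
    subst hp; subst hq
    rcases lt_trichotomy p q with h | h | h
    · right; exact (hanti p q h).1
    · left; rw [h]; exact L.op_self _
    · left; exact (hanti q p h).1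
  have h1 := hanti j ⟨i+1, hi⟩ (show j.val < i+1 by omega)
  have hac : L.op (x j) (x ⟨i+1, hi⟩) = x ⟨i+1, hi⟩ := hinv (x j) h1.1 (Ne.symm h1.2)
  have hyc : L.op (x k) (x ⟨i+1, hi⟩) = L.one := by
    rcases Nat.lt_or_ge (i+1) k.val with h | h
    · exact (hanti ⟨i+1, hi⟩ k (show i+1 < k.val from h)).1
    · have : k = ⟨i+1, hi⟩ := Fin.ext (show k.val = i+1 by omega)
      rw [this]; exact L.op_self _
  exact LAlg.key L hfin total h1.1 hac hyc
end

section
/- Let X be a finite linear L-algebra with elements x_0 > x_1 > ... > x_{n-1}. A subset I ⊆ X is an ideal of X if and only if I = {x_j : j ≤ i} for some i, where either i = n-1 or x_{i+1} is an invariant element. -/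
theorem stmt14 {X : Type*} (L : LAlgebra X) (n : ℕ) (hn : 0 < n) (x : Fin n → X)
    (hbij : Function.Bijective x)
    (hanti : ∀ i j : Fin n, i < j → (L.op (x j) (x i) = L.one ∧ x j ≠ x i))
    (I : Set X) :
    IsIdealOf L.op L.one I ↔
      ∃ i : Fin n,
        I = x '' {j : Fin n | j ≤ i} ∧
        (i.val = n - 1 ∨
          ∃ h : i.val + 1 < n,
            ∀ y : X, L.op (x ⟨i.val + 1, h⟩) y = L.one → y ≠ x ⟨i.val + 1, h⟩ →
              L.op y (x ⟨i.val + 1, h⟩) = x ⟨i.val + 1, h⟩) := by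
  classical
  obtain ⟨hinj, hsurj⟩ := hbij
  -- index function
  obtain ⟨g, hxg, hgx⟩ : ∃ g : X → Fin n, (∀ a, x (g a) = a) ∧ (∀ j, g (x j) = j) := by
    refine ⟨fun a => (hsurj a).choose, fun a => (hsurj a).choose_spec, fun j => ?_⟩
    exact hinj ((hsurj (x j)).choose_spec)
  -- order characterization
  have hle_iff : ∀ i j : Fin n, (L.op (x i) (x j) = L.one ↔ j ≤ i) := by
    intro i j
    constructor
    · intro hij
      by_contra hc
      push_neg at hc
      obtain ⟨h1, h2⟩ := hanti i j hc
      exact h2 (L.antisym _ _ h1 hij)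
    · intro hij
      rcases eq_or_lt_of_le hij with h | h
      · rw [h]; exact L.op_self _
      · exact (hanti j i h).1
  -- x 0 is the unit
  have hone0 : x ⟨0, hn⟩ = L.one := by
    have h1 : L.op (x ⟨0, hn⟩) (x (g L.one)) = L.one := by
      rw [hxg]; exact L.op_one _
    have h2 : g L.one ≤ ⟨0, hn⟩ := (hle_iff _ _).1 h1
    have h3 : g L.one = ⟨0, hn⟩ := by
      apply le_antisymm h2
      rw [Fin.le_def]; exact Nat.zero_le _
    rw [← h3, hxg]
  -- monotone in second argument
  have mono : ∀ a b c, L.op b c = L.one → L.op (L.op a b) (L.op a c) = L.one := by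
    intro a b c h
    rw [L.cycl, h, L.op_one]
  -- identity: a ≤ b → a·t = (b·a)·(b·t)
  have ident : ∀ a b t, L.op a b = L.one → L.op a t = L.op (L.op b a) (L.op b t) := by
    intro a b t h
    have hc := L.cycl a b t
    rwa [h, L.one_op] at hc
  -- the K property: t ≤ s·t
  have K : ∀ t s : X, L.op t (L.op s t) = L.one := by
    have main : ∀ m : ℕ, ∀ j : Fin n, n - 1 - j.val = m →
        ∀ s, L.op (x j) (L.op s (x j)) = L.one := by
      intro m
      induction m using Nat.strong_induction_on with
      | _ m IH =>
        intro j hj s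
        rcases le_total (g s) j with hk | hk
        · -- x j ≤ s
          have hts : L.op (x j) s = L.one := by
            conv_lhs => rw [← hxg s]
            exact (hle_iff _ _).2 hk
          set c := L.op s (x j) with hc
          rcases le_or_gt (g c) j with hjc | hjc
          · have h := (hle_iff j (g c)).2 hjc
            rwa [hxg] at h
          · have hIH := IH (n - 1 - (g c).val)
              (by
                have h1 := (g c).isLt
                have h2 : j.val < (g c).val := hjc
                omega)
              (g c) rfl s
            rw [hxg] at hIH
            have hcyc := L.cycl s (x j) c
            rw [hts, L.one_op, ← hc] at hcyc
            rw [hcyc] at hIH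
            exact hIH
        · -- s ≤ x j
          have hst : L.op s (x j) = L.one := by
            conv_lhs => rw [← hxg s]
            exact (hle_iff _ _).2 hk
          rw [hst, L.op_one]
    intro t s
    have h := main (n - 1 - (g t).val) (g t) rfl s
    rwa [hxg] at h
  constructor
  · rintro ⟨hone, hI1, hI2, hI3, hI4⟩
    have hSne : (Finset.univ.filter (fun j => x j ∈ I)).Nonempty :=
      ⟨⟨0, hn⟩, Finset.mem_filter.mpr ⟨Finset.mem_univ _, by rw [hone0]; exact hone⟩⟩
    obtain ⟨i, hiI, himax⟩ : ∃ i : Fin n, x i ∈ I ∧ ∀ j : Fin n, x j ∈ I → j ≤ i := by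
      refine ⟨(Finset.univ.filter (fun j => x j ∈ I)).max' hSne, ?_, ?_⟩
      · exact (Finset.mem_filter.mp (Finset.max'_mem _ hSne)).2
      · intro j hj
        exact Finset.le_max' _ j (Finset.mem_filter.mpr ⟨Finset.mem_univ _, hj⟩)
    have hmemI : ∀ j : Fin n, x j ∈ I ↔ j ≤ i := by
      intro j
      constructor
      · intro hj
        exact himax j hj
      · intro hj
        refine hI1 (x i) (x j) hiI ?_
        rw [(hle_iff i j).2 hj]; exact hone
    refine ⟨i, ?_, ?_⟩
    · ext a
      constructor
      · intro ha
        exact ⟨g a, (hmemI (g a)).1 (by rwa [hxg]), hxg a⟩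
      · rintro ⟨j, hj, rfl⟩
        exact (hmemI j).2 hj
    · by_cases hcase : i.val = n - 1
      · exact Or.inl hcase
      · have hlt : i.val + 1 < n := by
          have := i.isLt; omega
        refine Or.inr ⟨hlt, ?_⟩
        intro y hzy hyz
        have hyI : y ∈ I := by
          have h1 : g y ≤ ⟨i.val + 1, hlt⟩ := by
            apply (hle_iff _ _).1
            rwa [hxg]
          have h2 : (g y).val ≠ i.val + 1 := by
            intro hc
            apply hyz
            rw [← hxg y]
            congr 1
            exact Fin.ext hc
          have h3 : g y ≤ i := by
            have h1' : (g y).val ≤ i.val + 1 := h1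
            rw [Fin.le_def]
            omega
          rw [← hxg y]
          exact (hmemI _).2 h3
        have hwI : L.op y (x ⟨i.val + 1, hlt⟩) ∉ I := by
          intro hw
          have hzI : x ⟨i.val + 1, hlt⟩ ∈ I := hI1 y _ hyI hw
          have h := (hmemI ⟨i.val + 1, hlt⟩).1 hzI
          rw [Fin.le_def, Fin.val_mk] at h
          omega
        have hwz : L.op (L.op y (x ⟨i.val + 1, hlt⟩)) (x ⟨i.val + 1, hlt⟩) = L.one := by
          have h1 : ¬ (g (L.op y (x ⟨i.val + 1, hlt⟩)) ≤ i) := by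
            intro hc
            apply hwI
            rw [← hxg (L.op y (x ⟨i.val + 1, hlt⟩))]
            exact (hmemI _).2 hc
          have h2 : (⟨i.val + 1, hlt⟩ : Fin n) ≤ g (L.op y (x ⟨i.val + 1, hlt⟩)) := by
            rw [Fin.le_def] at h1 ⊢
            rw [Fin.val_mk]
            omega
          have h := (hle_iff (g (L.op y (x ⟨i.val + 1, hlt⟩))) ⟨i.val + 1, hlt⟩).2 h2
          rwa [hxg] at h
        exact L.antisym _ _ hwz (K (x ⟨i.val + 1, hlt⟩) y)
  · rintro ⟨i, rfl, hcond⟩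
    have hmem : ∀ a : X, a ∈ x '' {j : Fin n | j ≤ i} ↔ g a ≤ i := by
      intro a
      constructor
      · rintro ⟨j, hj, rfl⟩
        rwa [hgx]
      · intro h
        exact ⟨g a, h, hxg a⟩
    have honeI : L.one ∈ x '' {j : Fin n | j ≤ i} :=
      ⟨⟨0, hn⟩, by rw [Set.mem_setOf_eq, Fin.le_def]; exact Nat.zero_le _, hone0⟩
    rcases hcond with hcase | ⟨hlt, hinv⟩
    · have hall : ∀ a : X, a ∈ x '' {j : Fin n | j ≤ i} := by
        intro a
        rw [hmem, Fin.le_def]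
        have := (g a).isLt
        omega
      exact ⟨hall _, fun _ b _ _ => hall b, fun a b _ => hall _, fun a b _ => hall _,
        fun a b _ => hall _⟩
    · have hinv' : ∀ a : X, g a ≤ i → L.op a (x ⟨i.val + 1, hlt⟩) = x ⟨i.val + 1, hlt⟩ := by
        intro a ha
        apply hinv a
        · rw [← hxg a]
          apply (hle_iff _ _).2
          exact le_trans ha (Fin.le_def.mpr (Nat.le_succ _))
        · intro hc
          have h2 : g a = ⟨i.val + 1, hlt⟩ := by rw [hc, hgx]
          rw [h2, Fin.le_def, Fin.val_mk] at ha
          omega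
      have hbelow : ∀ b : X, ¬ (g b ≤ i) → L.op b (x ⟨i.val + 1, hlt⟩) = L.one := by
        intro b hb
        rw [← hxg b]
        apply (hle_iff _ _).2
        rw [Fin.le_def] at hb ⊢
        rw [Fin.val_mk]
        omega
      refine ⟨honeI, ?_, ?_, ?_, ?_⟩
      · -- I1
        intro a b ha hab
        rw [hmem] at ha hab ⊢
        by_contra hb
        have hbz := hbelow b hb
        have h1 : L.op (L.op a b) (L.op a (x ⟨i.val + 1, hlt⟩)) = L.one := mono a b _ hbz
        rw [hinv' a ha] at h1
        have h2 : (⟨i.val + 1, hlt⟩ : Fin n) ≤ g (L.op a b) := by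
          apply (hle_iff _ _).1
          rwa [hxg]
        rw [Fin.le_def, Fin.val_mk] at h2
        rw [Fin.le_def] at hab
        omega
      · -- I2
        intro a b ha
        rw [hmem] at ha ⊢
        have h1 : g (L.op b a) ≤ g a := by
          apply (hle_iff _ _).1
          rw [hxg, hxg]
          exact K a b
        exact le_trans h1 ha
      · -- I3
        intro a b ha
        rw [hmem] at ha
        by_cases hb : g b ≤ i
        · rw [hmem]
          have h1 : g (L.op (L.op a b) b) ≤ g b := by
            apply (hle_iff _ _).1
            rw [hxg, hxg]
            exact K b (L.op a b)
          exact le_trans h1 hb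
        · have hbz := hbelow b hb
          have hza : L.op (x ⟨i.val + 1, hlt⟩) a = L.one := by
            rw [← hxg a]
            apply (hle_iff _ _).2
            exact le_trans ha (Fin.le_def.mpr (Nat.le_succ _))
          have haz : L.op a (x ⟨i.val + 1, hlt⟩) = x ⟨i.val + 1, hlt⟩ := hinv' a ha
          have hcz : L.op (L.op a b) (x ⟨i.val + 1, hlt⟩) = L.one := by
            have h := mono a b (x ⟨i.val + 1, hlt⟩) hbz
            rwa [haz] at h
          have hz1 : L.op (x ⟨i.val + 1, hlt⟩) b
              = L.op (x ⟨i.val + 1, hlt⟩) (L.op a b) := by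
            have h := ident (x ⟨i.val + 1, hlt⟩) a b hza
            rwa [haz] at h
          have hfin : L.op (L.op a b) b = L.one := by
            have h := ident (L.op a b) (x ⟨i.val + 1, hlt⟩) b hcz
            rw [hz1, L.op_self] at h
            exact h
          rw [hfin]
          exact honeI
      · -- I4
        intro a b _
        rw [K b a]
        exact honeI
end

section
/- Let X be a CKL-algebra and let C be a connected component of the Hasse diagram (comparability graph under ≤) of X \ {1}. Then C ∪ {1} is an ideal of X. -/
theorem stmt15 {X : Type*} (L : LAlgebra X)
    (hCKL : ∀ x y z : X, L.op x (L.op y z) = L.op y (L.op x z))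
    (a : X) (ha : a ≠ L.one) :
    IsIdealOf L.op L.one
      ({b : X | b ≠ L.one ∧
        Relation.ReflTransGen
          (fun p q : X => p ≠ L.one ∧ q ≠ L.one ∧
            (L.op p q = L.one ∨ L.op q p = L.one)) a b} ∪ {L.one}) := by
  set R : X → X → Prop := fun p q : X => p ≠ L.one ∧ q ≠ L.one ∧
      (L.op p q = L.one ∨ L.op q p = L.one) with hRdef
  set C : Set X := {b : X | b ≠ L.one ∧ Relation.ReflTransGen R a b} with hCdef
  -- KL law: y·(x·y) = 1
  have hK : ∀ x y : X, L.op y (L.op x y) = L.one := by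
    intro x y
    rw [hCKL y x y, L.op_self, L.op_one]
  -- x·((x·y)·y) = 1
  have hK2 : ∀ x y : X, L.op x (L.op (L.op x y) y) = L.one := by
    intro x y
    rw [hCKL x (L.op x y) y, L.op_self]
  have hstep : ∀ x c : X, x ∈ C → c ≠ L.one →
      (L.op x c = L.one ∨ L.op c x = L.one) → c ∈ C := by
    intro x c hx hc hcomp
    exact ⟨hc, hx.2.tail ⟨hx.1, hc, hcomp⟩⟩
  refine ⟨Or.inr rfl, ?_, ?_, ?_, ?_⟩
  · intro x y hx hxy
    by_cases hy : y = L.one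
    · exact Or.inr hy
    rcases hx with hx | hx
    · rcases hxy with hxy | hxy
      · exact Or.inl (hstep _ _ hxy hy (Or.inr (hK x y)))
      · rw [Set.mem_singleton_iff] at hxy
        exact Or.inl (hstep _ _ hx hy (Or.inl hxy))
    · rw [Set.mem_singleton_iff] at hx
      subst hx
      rwa [L.one_op] at hxy
  · intro x y hx
    rcases hx with hx | hx
    · by_cases h : L.op y x = L.one
      · exact Or.inr h
      · exact Or.inl (hstep _ _ hx h (Or.inl (hK y x)))
    · rw [Set.mem_singleton_iff] at hx
      subst hx
      exact Or.inr (L.op_one y)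
  · intro x y hx
    rcases hx with hx | hx
    · by_cases h : L.op (L.op x y) y = L.one
      · exact Or.inr h
      · exact Or.inl (hstep _ _ hx h (Or.inl (hK2 x y)))
    · rw [Set.mem_singleton_iff] at hx
      subst hx
      rw [L.one_op, L.op_self]
      exact Or.inr rfl
  · intro x y _
    exact Or.inr (hK x y)
end

section
/- Let X be a Glivenko algebra (bounded CKL-algebra) with smallest element 0. Then Y = X \ {0} is closed under the operation, i.e., a CKL-subalgebra. Moreover, if I is an ideal of Y containing both some x and its negation x* = x·0, then I = Y. -/
theorem stmt16 {X : Type*} (L : LAlgebra X)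
    (hCKL : ∀ x y z : X, L.op x (L.op y z) = L.op y (L.op x z))
    (zero : X) (hzero : ∀ x : X, L.op zero x = L.one) :
    (∀ a b : X, a ≠ zero → b ≠ zero → L.op a b ≠ zero) ∧
    (∀ I : Set X, I ⊆ {x : X | x ≠ zero} → L.one ∈ I →
      (∀ x y : X, x ∈ I → y ≠ zero → L.op x y ∈ I → y ∈ I) →
      (∀ x : X, x ∈ I → L.op x zero ∈ I → I = {x : X | x ≠ zero})) := by
  have claim1 : ∀ a b : X, a ≠ zero → b ≠ zero → L.op a b ≠ zero := by
    intro a b ha hb hab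
    apply hb
    apply L.antisym
    · have : L.op b (L.op a b) = L.one := by
        rw [hCKL]; rw [L.op_self, L.op_one]
      rw [hab] at this; exact this
    · exact hzero b
  refine ⟨claim1, ?_⟩
  intro I hsub hone hclose x hx hxs
  ext y
  simp only [Set.mem_setOf_eq]
  constructor
  · intro hy; exact hsub hy
  · intro hy
    have hxne : x ≠ zero := hsub hx
    have hxy : L.op x y ∈ I := by
      apply hclose (L.op x zero) (L.op x y) hxs (claim1 x y hxne hy)
      have : L.op (L.op x zero) (L.op x y) = L.one := by
        rw [L.cycl, hzero, L.one_op, hzero]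
      rw [this]; exact hone
    exact hclose x y hx hy hxy
end

section
/- Let X be a finite linear Hilbert algebra with elements x_0 > x_1 > ... > x_{n-1}. Then X is isomorphic to LH_n, i.e., x_i · x_j = x_0 = 1 if i ≥ j and x_i · x_j = x_j if i < j. -/
theorem stmt18 {X : Type*} (L : LAlgebra X)
    (hH : ∀ x y z : X, L.op x (L.op y z) = L.op (L.op x y) (L.op x z))
    (n : ℕ) (x : Fin n → X)
    (hbij : Function.Bijective x)
    (hanti : ∀ i j : Fin n, i < j → (L.op (x j) (x i) = L.one ∧ x j ≠ x i)) :
    ∀ i j : Fin n,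
      (j ≤ i → L.op (x i) (x j) = L.one) ∧
      (i < j → L.op (x i) (x j) = x j) := by
  have tot : ∀ u v : X, L.op u v = L.one ∨ L.op v u = L.one := by
    intro u v
    obtain ⟨p, rfl⟩ := hbij.2 u
    obtain ⟨q, rfl⟩ := hbij.2 v
    rcases lt_trichotomy p q with h | h | h
    · exact Or.inr (hanti p q h).1
    · subst h; exact Or.inl (L.op_self _)
    · exact Or.inl (hanti q p h).1
  intro i j
  constructor
  · intro h
    rcases eq_or_lt_of_le h with h | h
    · subst h; exact L.op_self _
    · exact (hanti j i h).1
  · intro h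
    obtain ⟨hba, hne⟩ := hanti i j h
    set a := x i with ha
    set b := x j with hb
    set c := L.op a b with hc
    have hac : L.op a c = c := by
      rw [hc, hH, L.op_self, L.one_op]
    have hbc : L.op b c = L.one := by
      rw [hc, hH, hba, L.op_self, L.one_op]
    rcases tot a c with h1 | h1
    · exfalso
      rw [hac] at h1
      rw [hc] at h1
      exact hne (L.antisym b a hba h1)
    · have hcb : L.op c b = L.one := by
        have := hH c a b
        rw [h1, L.one_op, ← hc, L.op_self] at this
        exact this.symm
      exact L.antisym c b hcb hbc
end

section
/- Let X and Y be L-algebras such that Y operates on X via ρ, and suppose each ρ_v restricted to an ideal I satisfies ρ_v(I) ⊆ I (I is a ρ-ideal). Let ρ^I : Y → End(X/I) be the induced map and U = ker(ρ^I) = {u ∈ Y : ρ^I_u = id}. Then for all u ∈ U, x ∈ I, y ∈ X: (x·ρ_u(y))·y ∈ I and y·(x·ρ_u(y)) ∈ I. -/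
theorem stmt19 {X Y : Type*} (LX : LAlgebra X) (LY : LAlgebra Y) (ρ : Y → X → X)
    (hOp : Operates LX LY ρ)
    (I : Set X) (hI : IsIdealOf LX.op LX.one I)
    (hrho : ∀ (v : Y) (x : X), x ∈ I → ρ v x ∈ I)
    (u : Y)
    (hu : ∀ y : X, LX.op (ρ u y) y ∈ I ∧ LX.op y (ρ u y) ∈ I) :
    ∀ x y : X, x ∈ I →
      (LX.op (LX.op x (ρ u y)) y ∈ I ∧ LX.op y (LX.op x (ρ u y)) ∈ I) := by
  obtain ⟨h1, hI1, hI2, hI3, hI4⟩ := hI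
  -- key: a·b ∈ I → (c·a)·(c·b) ∈ I, hence transitivity
  have trans : ∀ p q r : X, LX.op p q ∈ I → LX.op q r ∈ I → LX.op p r ∈ I := by
    intro p q r hpq hqr
    have key : LX.op (LX.op p q) (LX.op p r) ∈ I := by
      rw [LX.cycl]
      exact hI2 _ _ hqr
    exact hI1 _ _ hpq key
  intro x y hx
  set z := ρ u y with hz
  constructor
  · exact trans _ z _ (hI3 _ _ hx) (hu y).1
  · exact trans _ z _ (hu y).2 (hI4 _ _ hx)
end
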